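/- arXiv:2604.23253 — 2 statements merged into one kernel-verified Lean document; each statement's English description precedes it below -/
import Mathlib

section
/- Let 0 < α < 1 and A > 0, and define the cusp branch arclength s(q) = ∫₀^q √(1 + A²α²η^{2α-2}) dη for q > 0. Then as q → 0⁺, s(q) = A q^α + q^{2-α}/(2Aα(2-α)) + o(q^{2-α}). -/
open Real Filter Asymptotics MeasureTheory intervalIntegral

lemma aux1 {u : ℝ} (hu : 0 < u) :
    |Real.sqrt (1 + u ^ 2) - u - 1 / (2 * u)| ≤ 1 / (8 * u ^ 3) := by
  set F := Real.sqrt (1 + u ^ 2) with hF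
  have hF2 : F ^ 2 = 1 + u ^ 2 := Real.sq_sqrt (by positivity)
  have hF0 : 0 ≤ F := Real.sqrt_nonneg _
  have hFu : u ≤ F := by nlinarith
  have hFpos : 0 < F := lt_of_lt_of_le hu hFu
  have key : F - u = 1 / (F + u) := by
    rw [eq_div_iff (by positivity)]; nlinarith
  have h1 : 1 / (2 * u) - (F - u) = 1 / (2 * u * (F + u) ^ 2) := by
    rw [key]; field_simp; nlinarith
  have h2 : 1 / (2 * u * (F + u) ^ 2) ≤ 1 / (8 * u ^ 3) := by
    apply one_div_le_one_div_of_le (by positivity)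
    nlinarith
  have h3 : (0:ℝ) ≤ 1 / (2 * u * (F + u) ^ 2) := by positivity
  rw [abs_le]; constructor <;> nlinarith

lemma aux2 {α c ε : ℝ} (hα0 : 0 < α) (hα1 : α < 1) (hc : 0 < c) {η : ℝ} (hη : 0 < η)
    (hb : η ^ (2 - 2 * α) ≤ 8 * c ^ 3 * ε) :
    |Real.sqrt (1 + c ^ 2 * η ^ (2 * α - 2)) - c * η ^ (α - 1) - η ^ (1 - α) / (2 * c)| ≤
      ε * η ^ (1 - α) := by
  set v : ℝ := η ^ (α - 1) with hv
  have hv0 : 0 < v := Real.rpow_pos_of_pos hη _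
  have hv2 : η ^ (2 * α - 2) = v ^ 2 := by
    rw [hv, show (2 * α - 2 : ℝ) = (α - 1) * 2 by ring, Real.rpow_mul hη.le,
      Real.rpow_two]
  have hvi : η ^ (1 - α) = v⁻¹ := by
    rw [hv, show (1 - α : ℝ) = -(α - 1) by ring, Real.rpow_neg hη.le]
  have hb' : (v⁻¹) ^ 2 ≤ 8 * c ^ 3 * ε := by
    rw [← hvi, ← Real.rpow_two, ← Real.rpow_mul hη.le,
      show (1 - α) * 2 = 2 - 2 * α by ring] at *
    exact hb
  rw [hv2, hvi]
  have h1 : c ^ 2 * v ^ 2 = (c * v) ^ 2 := by ring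
  have h2 : v⁻¹ / (2 * c) = 1 / (2 * (c * v)) := by field_simp
  rw [h1, h2]
  have := aux1 (mul_pos hc hv0)
  have h3 : 1 / (8 * (c * v) ^ 3) ≤ ε * v⁻¹ := by
    rw [div_le_iff₀ (by positivity)]
    have hvp : 0 < (v⁻¹) ^ 2 := by positivity
    have hc3 : 0 < c ^ 3 := by positivity
    have hε0 : 0 < ε := by nlinarith
    have h4 : 1 ≤ 8 * c ^ 3 * ε * v ^ 2 := by
      have := mul_le_mul_of_nonneg_right hb' (sq_nonneg v)
      rw [← mul_pow, inv_mul_cancel₀ hv0.ne', one_pow] at this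
      linarith
    have : ε * v⁻¹ * (8 * (c * v) ^ 3) = 8 * c ^ 3 * ε * v ^ 2 := by
      field_simp
    linarith [this ▸ h4]
  linarith [this, h3]

lemma auxMeas0 (e : ℝ) : Measurable fun η : ℝ => η ^ e := by measurability

lemma auxMeas (b e : ℝ) : Measurable fun η : ℝ => Real.sqrt (1 + b * η ^ e) :=
  (Real.continuous_sqrt.measurable).comp (measurable_const.add ((auxMeas0 e).const_mul b))

/-- Arclength asymptotics of the cusp branch `z = A q^α` near the tip:
`s(q) = A q^α + q^(2-α)/(2Aα(2-α)) + o(q^(2-α))` as `q → 0⁺`. -/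
theorem cusp_arclength_asymptotics (A α : ℝ) (hA : 0 < A) (hα0 : 0 < α) (hα1 : α < 1)
    (s : ℝ → ℝ)
    (hs : ∀ q > 0, s q = ∫ η in (0:ℝ)..q, Real.sqrt (1 + A ^ 2 * α ^ 2 * η ^ (2 * α - 2))) :
    (fun q : ℝ => s q - (A * q ^ α + q ^ (2 - α) / (2 * A * α * (2 - α))))
      =o[nhdsWithin 0 (Set.Ioi 0)] (fun q : ℝ => q ^ (2 - α)) := by
  set c : ℝ := A * α with hcdef
  have hc : 0 < c := mul_pos hA hα0
  have hca : A ^ 2 * α ^ 2 = c ^ 2 := by rw [hcdef]; ring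
  rw [isLittleO_iff]
  intro ε hε
  set r : ℝ := 2 - 2 * α with hrdef
  have hr : 0 < r := by rw [hrdef]; linarith
  set δ : ℝ := (8 * c ^ 3 * ε) ^ r⁻¹ with hδdef
  have hδ0 : 0 < δ := Real.rpow_pos_of_pos (by positivity) _
  have hδr : δ ^ r = 8 * c ^ 3 * ε := Real.rpow_inv_rpow (by positivity) hr.ne'
  filter_upwards [Ioo_mem_nhdsGT_of_mem (Set.mem_Ico.mpr ⟨le_refl (0:ℝ), hδ0⟩)] with q hq
  obtain ⟨hq0, hqδ⟩ := hq
  have huIoc : Set.uIoc (0:ℝ) q = Set.Ioc 0 q := Set.uIoc_of_le hq0.le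
  -- integrability of the pieces
  have hIG : IntervalIntegrable (fun η : ℝ => c * η ^ (α - 1)) volume 0 q :=
    (intervalIntegral.intervalIntegrable_rpow' (by linarith)).const_mul c
  have hIT : IntervalIntegrable (fun η : ℝ => η ^ (1 - α) / (2 * c)) volume 0 q :=
    (intervalIntegral.intervalIntegrable_rpow' (by linarith)).div_const _
  have hIF : IntervalIntegrable
      (fun η : ℝ => Real.sqrt (1 + A ^ 2 * α ^ 2 * η ^ (2 * α - 2))) volume 0 q := by
    refine IntervalIntegrable.mono_fun' (g := fun η : ℝ => 1 + c * η ^ (α - 1))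
      (intervalIntegrable_const.add hIG) ((auxMeas _ _).aestronglyMeasurable) ?_
    rw [huIoc]
    refine (ae_restrict_iff' measurableSet_Ioc).mpr (ae_of_all _ fun η hη => ?_)
    · 
      have hη0 : 0 < η := hη.1
      have hv2 : η ^ (2 * α - 2) = (η ^ (α - 1)) ^ 2 := by
        rw [show (2 * α - 2 : ℝ) = (α - 1) * 2 by ring, Real.rpow_mul hη0.le, Real.rpow_two]
      have hvp : 0 ≤ η ^ (α - 1) := Real.rpow_nonneg hη0.le _
      dsimp only
      rw [Real.norm_eq_abs, abs_of_nonneg (Real.sqrt_nonneg _)]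
      calc Real.sqrt (1 + A ^ 2 * α ^ 2 * η ^ (2 * α - 2))
          ≤ Real.sqrt ((1 + c * η ^ (α - 1)) ^ 2) := by
            apply Real.sqrt_le_sqrt
            rw [hca, hv2]; nlinarith
        _ = 1 + c * η ^ (α - 1) := Real.sqrt_sq (by positivity)
  -- values of the auxiliary integrals
  have hα' : α - 1 + 1 = α := by ring
  have hGval : (∫ η in (0:ℝ)..q, c * η ^ (α - 1)) = A * q ^ α := by
    rw [intervalIntegral.integral_const_mul, integral_rpow (Or.inl (by linarith)), hα',
      Real.zero_rpow hα0.ne', hcdef]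
    field_simp
    ring
  have h2α : 1 - α + 1 = 2 - α := by ring
  have hTval : (∫ η in (0:ℝ)..q, η ^ (1 - α) / (2 * c)) =
      q ^ (2 - α) / (2 * A * α * (2 - α)) := by
    rw [intervalIntegral.integral_div, integral_rpow (Or.inl (by linarith)), h2α,
      Real.zero_rpow (by intro h; linarith), hcdef]
    field_simp
    ring
  -- main identity
  have key : s q - (A * q ^ α + q ^ (2 - α) / (2 * A * α * (2 - α))) =
      ∫ η in (0:ℝ)..q, (Real.sqrt (1 + A ^ 2 * α ^ 2 * η ^ (2 * α - 2))
        - c * η ^ (α - 1) - η ^ (1 - α) / (2 * c)) := by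
    rw [intervalIntegral.integral_sub (hIF.sub hIG) hIT,
      intervalIntegral.integral_sub hIF hIG, hGval, hTval, hs q hq0]
    ring
  rw [key]
  -- bound the integral
  have hbnd : ‖∫ η in (0:ℝ)..q, (Real.sqrt (1 + A ^ 2 * α ^ 2 * η ^ (2 * α - 2))
        - c * η ^ (α - 1) - η ^ (1 - α) / (2 * c))‖ ≤
      |∫ η in (0:ℝ)..q, ε * η ^ (1 - α)| := by
    apply intervalIntegral.norm_integral_le_abs_of_norm_le
    · rw [huIoc, ae_restrict_iff' measurableSet_Ioc]
      refine ae_of_all _ fun η hη => ?_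
      have hη0 : 0 < η := hη.1
      have hbη : η ^ (2 - 2 * α) ≤ 8 * c ^ 3 * ε := by
        calc η ^ (2 - 2 * α) ≤ δ ^ (2 - 2 * α) :=
              Real.rpow_le_rpow hη0.le (le_of_lt (lt_of_le_of_lt hη.2 hqδ)) (by linarith)
          _ = 8 * c ^ 3 * ε := by rw [← hrdef]; exact hδr
      rw [Real.norm_eq_abs, hca]
      exact aux2 hα0 hα1 hc hη0 hbη
    · exact (intervalIntegral.intervalIntegrable_rpow' (by linarith)).const_mul ε
  have hεval : (∫ η in (0:ℝ)..q, ε * η ^ (1 - α)) = ε * (q ^ (2 - α) / (2 - α)) := by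
    rw [intervalIntegral.integral_const_mul, integral_rpow (Or.inl (by linarith)), h2α,
      Real.zero_rpow (by intro h; linarith)]
    ring
  have hq2 : 0 < q ^ (2 - α) := Real.rpow_pos_of_pos hq0 _
  have h2a : 1 ≤ 2 - α := by linarith
  calc ‖∫ η in (0:ℝ)..q, (Real.sqrt (1 + A ^ 2 * α ^ 2 * η ^ (2 * α - 2))
        - c * η ^ (α - 1) - η ^ (1 - α) / (2 * c))‖
      ≤ |∫ η in (0:ℝ)..q, ε * η ^ (1 - α)| := hbnd
    _ = ε * (q ^ (2 - α) / (2 - α)) := by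
        rw [hεval, abs_of_nonneg (by positivity)]
    _ ≤ ε * q ^ (2 - α) := by
        apply mul_le_mul_of_nonneg_left _ hε.le
        rw [div_le_iff₀ (by linarith)]
        nlinarith
    _ = ε * ‖q ^ (2 - α)‖ := by rw [Real.norm_eq_abs, abs_of_pos hq2]
end

section
/- Let cₚ > c_S > 0 and define F(c) = (2 - c²/c_S²)² - 4√(1 - c²/cₚ²)·√(1 - c²/c_S²) for 0 ≤ c ≤ c_S. Then F(0) = 0, F is not identically zero, F(c_S) = 1 > 0, and the function G(c) = F(c)/(c²/c_S²) (extended by continuity) satisfies G(0) < 0 and G(c_S) > 0; hence there exists c_R ∈ (0, c_S) with F(c_R) = 0. That is, the Rayleigh equation has a root strictly between 0 and the shear speed. -/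
open Real

/-- Existence of the Rayleigh root: with `F(c) = (2 - c²/c_S²)² - 4√(1-c²/c_P²)√(1-c²/c_S²)`
one has `F(0) = 0`, `F` not identically zero, `F(c_S) = 1 > 0`, the continuous extension
`G` of `F(c)/(c²/c_S²)` satisfies `G(0) < 0 < G(c_S)`, and consequently there is a root
`c_R ∈ (0, c_S)` of the Rayleigh equation `F(c_R) = 0`. -/
theorem rayleigh_root_exists (cP cS : ℝ) (hS : 0 < cS) (hPS : cS < cP)
    (F : ℝ → ℝ)
    (hF : ∀ c : ℝ, F c = (2 - c ^ 2 / cS ^ 2) ^ 2 -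
      4 * Real.sqrt (1 - c ^ 2 / cP ^ 2) * Real.sqrt (1 - c ^ 2 / cS ^ 2)) :
    F 0 = 0 ∧ (∃ c ∈ Set.Icc (0:ℝ) cS, F c ≠ 0) ∧ F cS = 1 ∧ (1:ℝ) > 0 ∧
    (∃ G : ℝ → ℝ, ContinuousOn G (Set.Icc 0 cS) ∧
      (∀ c ∈ Set.Ioc (0:ℝ) cS, G c = F c / (c ^ 2 / cS ^ 2)) ∧
      G 0 < 0 ∧ G cS > 0) ∧
    (∃ cR ∈ Set.Ioo (0:ℝ) cS, F cR = 0) := by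
  have hP : 0 < cP := hS.trans hPS
  have hS2 : (0:ℝ) < cS ^ 2 := by positivity
  have hSne : cS ^ 2 ≠ 0 := ne_of_gt hS2
  set a : ℝ := cS ^ 2 / cP ^ 2 with ha
  have ha_pos : 0 < a := by positivity
  have ha_lt : a < 1 := by
    rw [ha, div_lt_one (by positivity)]
    nlinarith
  -- the rationalized extension G
  set G : ℝ → ℝ := fun c =>
    4 * ((a + 1) - a * (c ^ 2 / cS ^ 2)) /
      (1 + Real.sqrt (1 - c ^ 2 / cP ^ 2) * Real.sqrt (1 - c ^ 2 / cS ^ 2))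
      - 4 + c ^ 2 / cS ^ 2 with hGdef
  have hden : ∀ c : ℝ,
      (1 + Real.sqrt (1 - c ^ 2 / cP ^ 2) * Real.sqrt (1 - c ^ 2 / cS ^ 2)) ≠ 0 := by
    intro c
    have h1 : (0:ℝ) ≤ Real.sqrt (1 - c ^ 2 / cP ^ 2) * Real.sqrt (1 - c ^ 2 / cS ^ 2) :=
      mul_nonneg (Real.sqrt_nonneg _) (Real.sqrt_nonneg _)
    positivity
  have hGcont : Continuous G := by
    apply Continuous.add
    apply Continuous.sub
    · exact (Continuous.div (by continuity) (by continuity) hden)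
    · exact continuous_const
    · continuity
  -- F 0 = 0
  have hF0 : F 0 = 0 := by
    rw [hF]; norm_num
  -- F cS = 1
  have hx1 : cS ^ 2 / cS ^ 2 = 1 := div_self hSne
  have hFcS : F cS = 1 := by
    rw [hF, hx1]; norm_num
  -- G agrees with F/(c²/cS²) on (0, cS]
  have hGeq : ∀ c ∈ Set.Ioc (0:ℝ) cS, G c = F c / (c ^ 2 / cS ^ 2) := by
    rintro c ⟨hc0, hccS⟩
    have hx : (0:ℝ) < c ^ 2 / cS ^ 2 := by positivity
    have hxle : c ^ 2 / cS ^ 2 ≤ 1 := by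
      rw [div_le_one hS2]
      exact pow_le_pow_left₀ hc0.le hccS 2
    have haxle : c ^ 2 / cP ^ 2 ≤ 1 := by
      rw [div_le_one (by positivity)]
      exact pow_le_pow_left₀ hc0.le (hccS.trans hPS.le) 2
    set s := Real.sqrt (1 - c ^ 2 / cP ^ 2) with hs
    set t := Real.sqrt (1 - c ^ 2 / cS ^ 2) with ht
    have hs2 : s ^ 2 = 1 - c ^ 2 / cP ^ 2 := Real.sq_sqrt (by linarith)
    have ht2 : t ^ 2 = 1 - c ^ 2 / cS ^ 2 := Real.sq_sqrt (by linarith)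
    have hst : (1 + s * t) ≠ 0 := hden c
    have key : (a + 1) * (c ^ 2 / cS ^ 2) - a * (c ^ 2 / cS ^ 2) ^ 2
        = (1 - s * t) * (1 + s * t) := by
      have h1 : (1 - s * t) * (1 + s * t) = 1 - s ^ 2 * t ^ 2 := by ring
      rw [h1, hs2, ht2, ha]
      field_simp
      ring
    rw [hGdef, hF]
    simp only
    rw [eq_div_iff (ne_of_gt hx)]
    have expand : (4 * ((a + 1) - a * (c ^ 2 / cS ^ 2)) / (1 + s * t) - 4 + c ^ 2 / cS ^ 2)
        * (c ^ 2 / cS ^ 2)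
        = 4 * ((a + 1) * (c ^ 2 / cS ^ 2) - a * (c ^ 2 / cS ^ 2) ^ 2) / (1 + s * t)
          - 4 * (c ^ 2 / cS ^ 2) + (c ^ 2 / cS ^ 2) ^ 2 := by
      field_simp
    rw [expand, key, mul_div_assoc, mul_div_assoc, div_self hst, ← hs, ← ht]
    ring
  -- G 0 < 0
  have hG0 : G 0 < 0 := by
    have : G 0 = 2 * a - 2 := by
      rw [hGdef]; norm_num; ring
    rw [this]; linarith
  -- G cS > 0
  have hGcS : G cS = 1 := by
    rw [hGdef]
    simp only [hx1]
    norm_num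
  -- root via IVT
  have hsub : Set.Ioo (G 0) (G cS) ⊆ G '' Set.Ioo 0 cS :=
    intermediate_value_Ioo hS.le hGcont.continuousOn
  have h0mem : (0:ℝ) ∈ Set.Ioo (G 0) (G cS) := ⟨hG0, by rw [hGcS]; norm_num⟩
  obtain ⟨cR, hcR, hGcR⟩ := hsub h0mem
  have hFcR : F cR = 0 := by
    have h := hGeq cR ⟨hcR.1, hcR.2.le⟩
    rw [hGcR] at h
    have hxne : cR ^ 2 / cS ^ 2 ≠ 0 := by
      have h1 := hcR.1
      positivity
    rcases div_eq_zero_iff.mp h.symm with h' | h'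
    · exact h'
    · exact absurd h' hxne
  refine ⟨hF0, ⟨cS, ⟨hS.le, le_refl _⟩, by rw [hFcS]; norm_num⟩, hFcS, one_pos,
    ⟨G, hGcont.continuousOn, hGeq, hG0, by rw [hGcS]; norm_num⟩,
    ⟨cR, hcR, hFcR⟩⟩
end
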